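/- arXiv:1812.11297 — 3 statements merged into one kernel-verified Lean document; each statement's English description precedes it below -/
import Mathlib

section
/- If Ξ is a set of distributions such that Ξ ∩ Ξ⁰ is M-convex, then there exist a pseudo M-concave function f (on Ξ⁰) and a constant λ ∈ ℝ such that {ξ ∈ Ξ⁰ : f(ξ) ≥ λ} = Ξ ∩ Ξ⁰. In particular, the indicator function f equal to 1 on Ξ ∩ Ξ⁰ and 0 elsewhere is pseudo M-concave, with λ = 1. -/
/-!
Two distinct distributions with the same total each exceed the other somewhere. If both lie in
the M-convex set `S`, its exchange axiom supplies a pair of coordinates keeping both moved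
distributions in `S`; otherwise the minimum of the 0/1 indicator of `S` at them is already `0`,
its least value, so any such pair of coordinates will do.
-/
open Finset

/-- Move one unit from coordinate `i` to coordinate `j`:  ξ - χ_i + χ_j. -/
def move {ι : Type*} [DecidableEq ι] (ξ : ι → ℕ) (i j : ι) : ι → ℕ :=
  fun k => ξ k - (if k = i then 1 else 0) + (if k = j then 1 else 0)

/-- A set of distributions is M-convex. -/
def MConvex {ι : Type*} [DecidableEq ι] (S : Set (ι → ℕ)) : Prop :=
  ∀ ξ ∈ S, ∀ ξ' ∈ S, ∀ i, ξ' i < ξ i →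
    ∃ j, ξ j < ξ' j ∧ move ξ i j ∈ S ∧ move ξ' j i ∈ S

/-- The set Ξ⁰ of distributions with total sum `N` respecting the school
capacities `q`. -/
def Xi0 {C T : Type*} [Fintype C] [Fintype T] (N : ℕ) (q : C → ℕ) :
    Set (C × T → ℕ) :=
  {ξ | (∑ p, ξ p = N) ∧ ∀ c, ∑ t, ξ (c, t) ≤ q c}

/-- Pseudo M-concavity of a function `f` on the domain `Ξ⁰`. -/
def PseudoMConcave {ι : Type*} [DecidableEq ι] (Xi : Set (ι → ℕ))
    (f : (ι → ℕ) → ℝ) : Prop :=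
  ∀ ξ ∈ Xi, ∀ ξ' ∈ Xi, ξ ≠ ξ' →
    ∃ i j, ξ' i < ξ i ∧ ξ j < ξ' j ∧
      min (f (move ξ i j)) (f (move ξ' j i)) ≥ min (f ξ) (f ξ')

theorem exists_lt_of_sum_eq_of_ne {ι M : Type*} [Fintype ι] [AddCommMonoid M] [LinearOrder M]
    [IsOrderedCancelAddMonoid M] {f g : ι → M} (hsum : ∑ i, f i = ∑ i, g i) (hne : f ≠ g) :
    ∃ i, g i < f i := by
  contrapose! hne
  exact funext fun i => (sum_eq_sum_iff_of_le fun i _ => hne i).1 hsum i (mem_univ i)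

theorem pseudoMConcave_of_indicator_of_MConvex {ι : Type*} [Fintype ι] [DecidableEq ι]
    {D S : Set (ι → ℕ)} {n : ℕ} (hD : ∀ ξ ∈ D, ∑ i, ξ i = n) (hS : MConvex S)
    {f : (ι → ℕ) → ℝ} (h1 : ∀ ξ ∈ S, f ξ = 1) (h0 : ∀ ξ ∉ S, f ξ = 0) :
    PseudoMConcave D f := by
  have hf_nonneg : ∀ ξ, 0 ≤ f ξ := fun ξ => by
    by_cases hξ : ξ ∈ S
    · simp [h1 ξ hξ]
    · simp [h0 ξ hξ]
  intro ξ hξ ξ' hξ' hne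
  have hsum : ∑ i, ξ i = ∑ i, ξ' i := (hD ξ hξ).trans (hD ξ' hξ').symm
  obtain ⟨i, hi⟩ := exists_lt_of_sum_eq_of_ne hsum hne
  by_cases hboth : ξ ∈ S ∧ ξ' ∈ S
  · obtain ⟨j, hj, hmove, hmove'⟩ := hS ξ hboth.1 ξ' hboth.2 i hi
    exact ⟨i, j, hi, hj, by rw [h1 _ hmove, h1 _ hmove', h1 _ hboth.1, h1 _ hboth.2]⟩
  · obtain ⟨j, hj⟩ := exists_lt_of_sum_eq_of_ne hsum.symm (Ne.symm hne)
    have hmin : min (f ξ) (f ξ') = 0 := by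
      rcases not_and_or.1 hboth with h | h
      · rw [h0 _ h]; exact min_eq_left (hf_nonneg _)
      · rw [h0 _ h]; exact min_eq_right (hf_nonneg _)
    refine ⟨i, j, hi, hj, ?_⟩
    rw [ge_iff_le, hmin]
    exact le_min (hf_nonneg _) (hf_nonneg _)

theorem setOf_mem_and_ge_one_eq_of_indicator {α : Type*} {D S : Set α} (hSD : S ⊆ D)
    {f : α → ℝ} (h1 : ∀ ξ ∈ S, f ξ = 1) (h0 : ∀ ξ ∉ S, f ξ = 0) :
    {ξ | ξ ∈ D ∧ f ξ ≥ 1} = S := by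
  ext ξ
  refine ⟨fun ⟨_, hf⟩ => ?_, fun h => ⟨hSD h, (h1 ξ h).ge⟩⟩
  by_contra h
  rw [h0 ξ h] at hf
  norm_num at hf

/-- If `Ξ ∩ Ξ⁰` is M-convex, then there are a pseudo M-concave function `f`
and a constant `λ` whose upper contour set within `Ξ⁰` is exactly `Ξ ∩ Ξ⁰`;
in particular the 0/1 indicator of `Ξ ∩ Ξ⁰` works with `λ = 1`. -/
theorem MConvex_iff_pseudoMConcave_representation
    {C T : Type*} [Fintype C] [Fintype T] [DecidableEq C] [DecidableEq T]
    (N : ℕ) (q : C → ℕ) (Ξ : Set (C × T → ℕ))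
    (hM : MConvex (Ξ ∩ Xi0 (T := T) N q)) :
    (∃ (f : (C × T → ℕ) → ℝ) (lam : ℝ),
        PseudoMConcave (Xi0 (T := T) N q) f ∧
        {ξ | ξ ∈ Xi0 (T := T) N q ∧ f ξ ≥ lam} = Ξ ∩ Xi0 (T := T) N q) ∧
    (∀ f : (C × T → ℕ) → ℝ,
        (∀ ξ ∈ Ξ ∩ Xi0 (T := T) N q, f ξ = 1) →
        (∀ ξ ∉ Ξ ∩ Xi0 (T := T) N q, f ξ = 0) →
        PseudoMConcave (Xi0 (T := T) N q) f ∧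
        {ξ | ξ ∈ Xi0 (T := T) N q ∧ f ξ ≥ 1} = Ξ ∩ Xi0 (T := T) N q) := by
  have indicator : ∀ f : (C × T → ℕ) → ℝ,
      (∀ ξ ∈ Ξ ∩ Xi0 (T := T) N q, f ξ = 1) →
      (∀ ξ ∉ Ξ ∩ Xi0 (T := T) N q, f ξ = 0) →
      PseudoMConcave (Xi0 (T := T) N q) f ∧
      {ξ | ξ ∈ Xi0 (T := T) N q ∧ f ξ ≥ 1} = Ξ ∩ Xi0 (T := T) N q := fun f h1 h0 =>
    ⟨pseudoMConcave_of_indicator_of_MConvex (fun _ hξ => hξ.1) hM h1 h0,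
      setOf_mem_and_ge_one_eq_of_indicator Set.inter_subset_right h1 h0⟩
  exact ⟨⟨(Ξ ∩ Xi0 (T := T) N q).indicator 1, 1,
    indicator _ (fun ξ hξ => by simp [hξ]) (fun ξ hξ => by simp [hξ])⟩, indicator⟩
end

section
/- Let Ξ be the balanced-exchange policy: Ξ = {ξ : for every district d, ∑_t ∑_{c with d(c)=d} ξ_c^t = k_d}, where k_d is a fixed number for each district and each school c belongs to a district d(c). Then Ξ ∩ Ξ⁰ is an M-convex set. -/
open Finset

/-!
A unit move `ξ - χ_{c,t} + χ_{c',t'}` keeps the district totals when `c` and `c'` lie in the same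
district, and keeps the capacities when `c' = c` or school `c'` has spare capacity. Given
`ξ'_c^t < ξ_c^t`, either some type `t'` at the same school has `ξ_c^{t'} < ξ'_c^{t'}`, or
school `c` is strictly fuller in `ξ` than in `ξ'`; equal district totals then force another
school `c'` of the district to be strictly fuller in `ξ'`, so `c'` has spare capacity in `ξ`
and `c` in `ξ'`.
-/

lemma sum_move_add_ite {ι : Type*} [DecidableEq ι] (s : Finset ι) (ξ : ι → ℕ) {i : ι}
    (hi : 0 < ξ i) (j : ι) :
    ∑ x ∈ s, move ξ i j x + (if i ∈ s then 1 else 0)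
      = ∑ x ∈ s, ξ x + (if j ∈ s then 1 else 0) := by
  have hpoint : ∀ x, move ξ i j x + (if x = i then 1 else 0)
      = ξ x + (if x = j then 1 else 0) := by
    intro x
    by_cases hx : x = i <;> simp [move, hx]
    omega
  rw [← sum_ite_eq' s i (fun _ => 1), ← sum_ite_eq' s j (fun _ => 1), ← sum_add_distrib,
    ← sum_add_distrib, sum_congr rfl fun x _ => hpoint x]

lemma exists_lt_of_sum_eq_of_lt {ι : Type*} {s : Finset ι} {f g : ι → ℕ}
    (hsum : ∑ i ∈ s, f i = ∑ i ∈ s, g i) {a : ι} (ha : a ∈ s) (hlt : g a < f a) :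
    ∃ b ∈ s, f b < g b := by
  by_contra! hle
  exact (sum_lt_sum hle ⟨a, ha, hlt⟩).ne' hsum

section Schools

variable {C T D : Type*} [Fintype T]

def schoolLoad (ξ : C × T → ℕ) (c : C) : ℕ := ∑ t, ξ (c, t)

lemma sum_schoolLoad_move_add_ite [DecidableEq C] [DecidableEq T] (s : Finset C)
    (ξ : C × T → ℕ) {c₀ : C} {t₀ : T} (hpos : 0 < ξ (c₀, t₀)) (c₁ : C) (t₁ : T) :
    ∑ c ∈ s, schoolLoad (move ξ (c₀, t₀) (c₁, t₁)) c + (if c₀ ∈ s then 1 else 0)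
      = ∑ c ∈ s, schoolLoad ξ c + (if c₁ ∈ s then 1 else 0) := by
  simpa [schoolLoad, sum_product, mem_product] using
    sum_move_add_ite (s ×ˢ (univ : Finset T)) ξ hpos (c₁, t₁)

variable [Fintype C] [DecidableEq D]

/-- The balanced-exchange policy `Ξ` of the paper. -/
def balancedPolicy (dc : C → D) (k : D → ℕ) : Set (C × T → ℕ) :=
  {ξ | ∀ d, ∑ c ∈ univ.filter (fun c => dc c = d), schoolLoad ξ c = k d}

lemma move_mem_balancedPolicy [DecidableEq C] [DecidableEq T] {dc : C → D} {k : D → ℕ}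
    {ξ : C × T → ℕ}
    (hξ : ξ ∈ balancedPolicy dc k) {c₀ c₁ : C} {t₀ : T} (hpos : 0 < ξ (c₀, t₀))
    (hd : dc c₁ = dc c₀) (t₁ : T) :
    move ξ (c₀, t₀) (c₁, t₁) ∈ balancedPolicy dc k := by
  intro d
  have h := sum_schoolLoad_move_add_ite (univ.filter (fun c => dc c = d)) ξ hpos c₁ t₁
  simp only [mem_filter, mem_univ, true_and, hd] at h
  have := hξ d
  split_ifs at h <;> omega

lemma move_mem_Xi0 [DecidableEq C] [DecidableEq T] {N : ℕ} {q : C → ℕ} {ξ : C × T → ℕ}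
    (hξ : ξ ∈ Xi0 N q) {c₀ c₁ : C} {t₀ : T}
    (hpos : 0 < ξ (c₀, t₀)) (hslack : c₁ = c₀ ∨ schoolLoad ξ c₁ < q c₁) (t₁ : T) :
    move ξ (c₀, t₀) (c₁, t₁) ∈ Xi0 N q := by
  obtain ⟨htotal, hcap⟩ := hξ
  refine ⟨?_, fun c => ?_⟩
  · have h := sum_schoolLoad_move_add_ite univ ξ hpos c₁ t₁
    simp only [mem_univ, if_true, add_left_inj, schoolLoad] at h
    rwa [Fintype.sum_prod_type, h, ← Fintype.sum_prod_type]
  · show schoolLoad _ c ≤ q c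
    have hcapc : schoolLoad ξ c ≤ q c := hcap c
    have h := sum_schoolLoad_move_add_ite {c} ξ hpos c₁ t₁
    simp only [sum_singleton, mem_singleton] at h
    by_cases hc₁ : c₁ = c
    · subst hc₁
      rcases hslack with rfl | hlt
      · simp only [if_true, add_left_inj] at h
        omega
      · split_ifs at h <;> omega
    · rw [if_neg hc₁] at h
      split_ifs at h <;> omega

lemma exists_exchange_partner {dc : C → D} {k : D → ℕ} {ξ ξ' : C × T → ℕ}
    (hξ : ξ ∈ balancedPolicy dc k) (hξ' : ξ' ∈ balancedPolicy dc k) {c₀ : C} {t₀ : T}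
    (hlt : ξ' (c₀, t₀) < ξ (c₀, t₀)) :
    ∃ c₁ t₁, dc c₁ = dc c₀ ∧ ξ (c₁, t₁) < ξ' (c₁, t₁) ∧
      (c₁ = c₀ ∨
        schoolLoad ξ c₁ < schoolLoad ξ' c₁ ∧ schoolLoad ξ' c₀ < schoolLoad ξ c₀) := by
  by_cases hsame : ∃ t₁, ξ (c₀, t₁) < ξ' (c₀, t₁)
  · obtain ⟨t₁, ht₁⟩ := hsame
    exact ⟨c₀, t₁, rfl, ht₁, Or.inl rfl⟩
  simp only [not_exists, not_lt] at hsame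
  have hload : schoolLoad ξ' c₀ < schoolLoad ξ c₀ :=
    sum_lt_sum (fun t _ => hsame t) ⟨t₀, mem_univ t₀, hlt⟩
  obtain ⟨c₁, hc₁, hload₁⟩ :=
    exists_lt_of_sum_eq_of_lt ((hξ (dc c₀)).trans (hξ' (dc c₀)).symm) (by simp) hload
  obtain ⟨t₁, -, ht₁⟩ := exists_lt_of_sum_lt hload₁
  exact ⟨c₁, t₁, (mem_filter.mp hc₁).2, ht₁, Or.inr ⟨hload₁, hload⟩⟩

end Schools

theorem balancedExchange_MConvex_general
    {C T D : Type*} [Fintype C] [Fintype T]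
    [DecidableEq C] [DecidableEq T] [DecidableEq D]
    (N : ℕ) (q : C → ℕ) (dc : C → D) (k : D → ℕ) :
    MConvex ({ξ : C × T → ℕ |
        ∀ d, ∑ c ∈ univ.filter (fun c => dc c = d), ∑ t, ξ (c, t) = k d}
      ∩ Xi0 (T := T) N q) := by
  rintro ξ ⟨hξ, hξ0⟩ ξ' ⟨hξ', hξ0'⟩ ⟨c₀, t₀⟩ hlt
  obtain ⟨c₁, t₁, hd, hlt₁, hpartner⟩ :=
    exists_exchange_partner (dc := dc) (k := k) hξ hξ' hlt
  have hslack : c₁ = c₀ ∨ schoolLoad ξ c₁ < q c₁ :=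
    hpartner.imp_right fun h => h.1.trans_le (hξ0'.2 c₁)
  have hslack' : c₀ = c₁ ∨ schoolLoad ξ' c₀ < q c₀ :=
    hpartner.imp Eq.symm fun h => h.2.trans_le (hξ0.2 c₀)
  exact ⟨(c₁, t₁), hlt₁,
    ⟨move_mem_balancedPolicy (dc := dc) hξ (by omega) hd t₁,
      move_mem_Xi0 hξ0 (by omega) hslack t₁⟩,
    ⟨move_mem_balancedPolicy (dc := dc) hξ' (by omega) hd.symm t₀,
      move_mem_Xi0 hξ0' (by omega) hslack' t₀⟩⟩

/-- For the balanced-exchange policy (each district `d` is assigned exactly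
`k d` students, summing over the schools of the district), `Ξ ∩ Ξ⁰` is an
M-convex set. -/
theorem balancedExchange_MConvex
    {C T D : Type*} [Fintype C] [Fintype T] [Fintype D]
    [DecidableEq C] [DecidableEq T] [DecidableEq D]
    (N : ℕ) (q : C → ℕ) (dc : C → D) (k : D → ℕ)
    (hN : ∑ d, k d = N) :
    MConvex ({ξ : C × T → ℕ |
        ∀ d, ∑ c ∈ univ.filter (fun c => dc c = d), ∑ t, ξ (c, t) = k d}
      ∩ Xi0 (T := T) N q) :=
  balancedExchange_MConvex_general N q dc k
end

section
/- If each district's admissions rule has type-specific reserves with ∑_c r_c^t = k^t for every type t (where k^t is the number of type-t students), then the profile of district admissions rules accommodates unmatched students. -/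
/-!
Let `s` be an unmatched student of type `t`. Every student holds at most one contract and `s`
holds none, so fewer than `k^t` type-`t` students are matched: the numbers of type-`t` students
at the schools sum to less than `∑_c r_c^t = k^t`. Hence some school `c` holds fewer than
`r_c^t` of them, and its reserve makes the district of `c` choose `(s, c)`.
-/

open Finset

section

variable {S D C T : Type*} [Fintype S] [Fintype C] [Fintype D] [Fintype T]
  [DecidableEq S] [DecidableEq C] [DecidableEq D] [DecidableEq T]

/-- A matching is feasible for students: each student has at most one contract. -/
def feasibleS (X : Finset (S × C)) : Prop :=
  ∀ s : S, (X.filter (fun x => x.1 = s)).card ≤ 1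

/-- A matching is feasible: feasible for students and each school `c` is
assigned at most `q c` contracts. -/
def feasible (q : C → ℕ) (X : Finset (S × C)) : Prop :=
  feasibleS X ∧ ∀ c : C, (X.filter (fun x => x.2 = c)).card ≤ q c

/-- The profile of district admissions rules accommodates unmatched students. -/
def accommodates (dc : C → D) (q : C → ℕ)
    (Ch : D → Finset (S × C) → Finset (S × C)) : Prop :=
  ∀ (s : S) (X : Finset (S × C)), feasible q X → (∀ c, (s, c) ∉ X) →
    ∃ c, (s, c) ∈ Ch (dc c) (insert (s, c) X)

/-- The rule of the district of school `c` has a reserve of `r c t` for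
type-`t` students at `c`. -/
def hasReserves (dc : C → D) (q : C → ℕ) (τ : S → T) (r : C → T → ℕ)
    (Ch : D → Finset (S × C) → Finset (S × C)) : Prop :=
  ∀ (c : C) (s : S) (X : Finset (S × C)), feasible q X →
    (∀ c', (s, c') ∉ X) →
    (X.filter (fun y => y.2 = c ∧ τ y.1 = τ s)).card < r c (τ s) →
    (s, c) ∈ Ch (dc c) (insert (s, c) X)

theorem feasibleS.injOn_fst {X : Finset (S × C)} (hX : feasibleS X) :
    Set.InjOn Prod.fst (X : Set (S × C)) := by
  intro y hy y' hy' h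
  exact card_le_one.mp (hX y.1) y (mem_filter.mpr ⟨hy, rfl⟩) y' (mem_filter.mpr ⟨hy', h.symm⟩)

theorem card_filter_fst_lt_of_unmatched {X : Finset (S × C)} (hX : feasibleS X) (P : S → Prop)
    [DecidablePred P] {s : S} (hs : P s) (hsX : ∀ c, (s, c) ∉ X) :
    (X.filter (fun y => P y.1)).card < (univ.filter P).card := by
  calc (X.filter (fun y => P y.1)).card
      ≤ ((univ.filter P).erase s).card := by
        refine card_le_card_of_injOn Prod.fst (fun y hy => ?_) (hX.injOn_fst.mono ?_)
        · obtain ⟨hyX, hyP⟩ := mem_filter.mp hy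
          exact mem_erase.mpr ⟨fun h => hsX y.2 (h ▸ hyX), mem_filter.mpr ⟨mem_univ _, hyP⟩⟩
        · exact coe_subset.mpr (filter_subset _ _)
    _ < (univ.filter P).card := card_erase_lt_of_mem (mem_filter.mpr ⟨mem_univ _, hs⟩)

theorem sum_card_filter_snd_eq (X : Finset (S × C)) (P : S × C → Prop) [DecidablePred P] :
    ∑ c, (X.filter (fun y => y.2 = c ∧ P y)).card = (X.filter P).card := by
  rw [card_eq_sum_card_fiberwise (f := Prod.snd) (t := univ) (fun y _ => mem_univ _)]
  simp only [filter_filter, and_comm]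

theorem exists_reserve_unfilled (τ : S → T) (r : C → T → ℕ)
    (hr : ∀ t, ∑ c, r c t = (univ.filter (fun s => τ s = t)).card)
    {X : Finset (S × C)} (hX : feasibleS X) {s : S} (hsX : ∀ c, (s, c) ∉ X) :
    ∃ c, (X.filter (fun y => y.2 = c ∧ τ y.1 = τ s)).card < r c (τ s) := by
  have hsum : ∑ c, (X.filter (fun y => y.2 = c ∧ τ y.1 = τ s)).card < ∑ c, r c (τ s) := by
    rw [sum_card_filter_snd_eq X (fun y => τ y.1 = τ s), hr]
    exact card_filter_fst_lt_of_unmatched hX (fun s' => τ s' = τ s) rfl hsX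
  obtain ⟨c, -, hc⟩ := exists_lt_of_sum_lt hsum
  exact ⟨c, hc⟩

/-- If district admissions rules have type-specific reserves with
`∑_c r_c^t = k^t` for every type `t` (where `k^t` is the number of type-`t`
students), then the profile of district admissions rules accommodates
unmatched students. -/
theorem reserves_accommodate
    (dc : C → D) (q : C → ℕ) (τ : S → T) (kt : T → ℕ)
    (hkt : ∀ t, kt t = (univ.filter (fun s => τ s = t)).card)
    (r : C → T → ℕ) (hr : ∀ t, ∑ c, r c t = kt t)
    (Ch : D → Finset (S × C) → Finset (S × C))
    (hres : hasReserves dc q τ r Ch) :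
    accommodates dc q Ch := by
  intro s X hX hsX
  obtain ⟨c, hc⟩ := exists_reserve_unfilled τ r (fun t => (hr t).trans (hkt t)) hX.1 hsX
  exact ⟨c, hres c s X hX hsX hc⟩

end
end
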